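/- arXiv:1512.08106 — 6 statements merged into one kernel-verified Lean document; each statement's English description precedes it below -/
import Mathlib

section
/- For every sequence of integers a : ℕ → ℤ, both AEinf(a) and AEsup(a) lie in the interval [TPinf(a), TPsup(a)] of the extended reals; that is, TPinf(a) ≤ AEinf(a) ≤ AEsup(a) ≤ TPsup(a). -/
open Filter

noncomputable section

/-- Energy level of the integer sequence `a` at position `n`: the sum of the first `n` weights. -/
def EL (a : ℕ → ℤ) (n : ℕ) : ℤ := ∑ i ∈ Finset.range n, a i

/-- Average-energy (limsup variant) of a sequence of integers, in the extended reals. -/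
def AEsup (a : ℕ → ℤ) : EReal :=
  limsup (fun n : ℕ => (((∑ i ∈ Finset.range n, (EL a (i + 1) : ℝ)) / n : ℝ) : EReal)) atTop

/-- Average-energy (liminf variant). -/
def AEinf (a : ℕ → ℤ) : EReal :=
  liminf (fun n : ℕ => (((∑ i ∈ Finset.range n, (EL a (i + 1) : ℝ)) / n : ℝ) : EReal)) atTop

/-- Total-payoff (limsup variant). -/
def TPsup (a : ℕ → ℤ) : EReal :=
  limsup (fun n : ℕ => ((EL a n : ℝ) : EReal)) atTop

/-- Total-payoff (liminf variant). -/
def TPinf (a : ℕ → ℤ) : EReal :=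
  liminf (fun n : ℕ => ((EL a n : ℝ) : EReal)) atTop

/-- Mean-payoff (limsup variant). -/
def MPsup (a : ℕ → ℤ) : EReal :=
  limsup (fun n : ℕ => (((EL a n : ℝ) / n : ℝ) : EReal)) atTop

/-- Mean-payoff (liminf variant). -/
def MPinf (a : ℕ → ℤ) : EReal :=
  liminf (fun n : ℕ => (((EL a n : ℝ) / n : ℝ) : EReal)) atTop

/-! The average energy is a Cesàro mean of the shifted energy levels `EL a (i + 1)`, whose
liminf and limsup are the total-payoff values; Cesàro averaging can only shrink the interval
between liminf and limsup: if eventually `b n ≤ r`, the means of `b` are dominated by those of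
`max b r`, which is eventually constant and so has means tending to `r`. -/

open scoped Topology

def cesaroMean (b : ℕ → ℝ) (n : ℕ) : ℝ := (∑ i ∈ Finset.range n, b i) / n

lemma cesaroMean_neg (b : ℕ → ℝ) (n : ℕ) : cesaroMean (-b) n = -cesaroMean b n := by
  simp only [cesaroMean, Pi.neg_apply, Finset.sum_neg_distrib, neg_div]

lemma cesaroMean_mono {b c : ℕ → ℝ} (h : b ≤ c) (n : ℕ) : cesaroMean b n ≤ cesaroMean c n :=
  div_le_div_of_nonneg_right (Finset.sum_le_sum fun i _ => h i) n.cast_nonneg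

lemma limsup_cesaroMean_le (b : ℕ → ℝ) :
    limsup (fun n => (cesaroMean b n : EReal)) atTop ≤ limsup (fun n => (b n : EReal)) atTop := by
  refine EReal.le_of_forall_lt_iff_le.mp fun r hr => ?_
  have hb : ∀ᶠ n in atTop, b n ≤ r :=
    (eventually_lt_of_limsup_lt hr).mono fun n h => mod_cast h.le
  have hmax : Tendsto (fun n => max (b n) r) atTop (𝓝 r) :=
    tendsto_const_nhds.congr' (hb.mono fun n h => (max_eq_right h).symm)
  have hmean : Tendsto (cesaroMean fun n => max (b n) r) atTop (𝓝 r) :=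
    hmax.cesaro.congr fun n => (div_eq_inv_mul _ _).symm
  calc limsup (fun n => (cesaroMean b n : EReal)) atTop
      ≤ limsup (fun n => (cesaroMean (fun n => max (b n) r) n : EReal)) atTop :=
        limsup_le_limsup (.of_forall fun n => EReal.coe_le_coe_iff.mpr <|
          cesaroMean_mono (fun i => le_max_left _ _) n)
    _ = r := ((continuous_coe_real_ereal.tendsto r).comp hmean).limsup_eq

lemma le_liminf_cesaroMean (b : ℕ → ℝ) :
    liminf (fun n => (b n : EReal)) atTop ≤ liminf (fun n => (cesaroMean b n : EReal)) atTop := by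
  have h := limsup_cesaroMean_le (-b)
  simp only [cesaroMean_neg, Pi.neg_apply, EReal.coe_neg] at h
  rwa [← Pi.neg_def, ← Pi.neg_def, EReal.limsup_neg, EReal.limsup_neg, EReal.neg_le_neg_iff] at h

/-- Both average-energy values lie between the liminf and limsup total-payoff values. -/
theorem AE_between_TP (a : ℕ → ℤ) :
    TPinf a ≤ AEinf a ∧ AEinf a ≤ AEsup a ∧ AEsup a ≤ TPsup a := by
  have hTPinf : TPinf a = liminf (fun n => ((EL a (n + 1) : ℝ) : EReal)) atTop :=
    (liminf_nat_add (fun n => ((EL a n : ℝ) : EReal)) 1).symm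
  have hTPsup : TPsup a = limsup (fun n => ((EL a (n + 1) : ℝ) : EReal)) atTop :=
    (limsup_nat_add (fun n => ((EL a n : ℝ) : EReal)) 1).symm
  refine ⟨?_, liminf_le_limsup, ?_⟩
  · exact hTPinf ▸ le_liminf_cesaroMean fun i => (EL a (i + 1) : ℝ)
  · exact hTPsup ▸ limsup_cesaroMean_le fun i => (EL a (i + 1) : ℝ)

end
end

section
/- Let L = [b₀, …, b_{k−1}] be a finite list of integers and a : ℕ → ℤ a sequence, and let L·a denote the concatenated sequence b₀, …, b_{k−1}, a(0), a(1), …. Then AEsup(L·a) = (Σ_{i<k} b_i) + AEsup(a) and AEinf(L·a) = (Σ_{i<k} b_i) + AEinf(a), where the sum with ±∞ in the extended reals is interpreted in the usual way. -/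
/-! Every energy level of `L·a` past position `k = |L|` is the corresponding level of `a` shifted
by `s = ΣL`, so the cumulative energy satisfies `C_{L·a}(k + n) = C_{L·a}(k) + n·s + C_a(n)`.
Hence the averages of `L·a`, read from position `k` on, are `c_n · (C_a(n)/n) + d_n` with
`c_n → 1` and `d_n → s`. Such affine perturbations shift limsup and liminf in `EReal` exactly
by `s`: where eventually `w_n < b`, also `c_n w_n + d_n < c_n b + d_n → b + s`, and the
perturbation can be inverted. -/

open Filter

noncomputable section

/-- The sequence obtained by prepending the finite list `L` to the sequence `a`. -/
def prependSeq (L : List ℤ) (a : ℕ → ℤ) : ℕ → ℤ := fun n =>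
  if h : n < L.length then L.get ⟨n, h⟩ else a (n - L.length)

open Topology

lemma EReal.coe_add_neg_add_cancel (s : ℝ) (x : EReal) : (s : EReal) + ((-s : ℝ) + x) = x := by
  rw [← add_assoc, ← EReal.coe_add, add_neg_cancel, EReal.coe_zero, zero_add]

section Affine

variable {c d : ℕ → ℝ} {s : ℝ}

lemma limsup_affine_le (hc : Tendsto c atTop (𝓝 1)) (hd : Tendsto d atTop (𝓝 s)) (w : ℕ → ℝ) :
    limsup (fun n => ((c n * w n + d n : ℝ) : EReal)) atTop ≤
      s + limsup (fun n => (w n : EReal)) atTop := by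
  refine EReal.le_of_forall_lt_iff_le.1 fun z hz => ?_
  have hw : limsup (fun n => (w n : EReal)) atTop < (z - s : ℝ) := by
    rw [EReal.coe_sub,
      EReal.lt_sub_iff_add_lt (.inl (EReal.coe_ne_bot s)) (.inl (EReal.coe_ne_top s)), add_comm]
    exact hz
  have hlim : Tendsto (fun n => c n * (z - s) + d n) atTop (𝓝 z) := by
    simpa using (hc.mul_const (z - s)).add hd
  calc limsup (fun n => ((c n * w n + d n : ℝ) : EReal)) atTop
      ≤ limsup (fun n => ((c n * (z - s) + d n : ℝ) : EReal)) atTop := by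
        refine limsup_le_limsup ?_
        filter_upwards [eventually_lt_of_limsup_lt hw, hc.eventually (lt_mem_nhds zero_lt_one)]
          with n hwn hcn
        exact EReal.coe_le_coe_iff.2 (by gcongr; exact EReal.coe_lt_coe_iff.1 hwn |>.le)
    _ = z := (continuous_coe_real_ereal.tendsto _ |>.comp hlim).limsup_eq

lemma le_liminf_affine (hc : Tendsto c atTop (𝓝 1)) (hd : Tendsto d atTop (𝓝 s)) (w : ℕ → ℝ) :
    s + liminf (fun n => (w n : EReal)) atTop ≤
      liminf (fun n => ((c n * w n + d n : ℝ) : EReal)) atTop := by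
  refine EReal.ge_of_forall_gt_iff_ge.1 fun z hz => ?_
  have hw : ((z - s : ℝ) : EReal) < liminf (fun n => (w n : EReal)) atTop := by
    rw [EReal.coe_sub, EReal.sub_lt_iff (.inl (EReal.coe_ne_bot s)) (.inl (EReal.coe_ne_top s)),
      add_comm]
    exact hz
  have hlim : Tendsto (fun n => c n * (z - s) + d n) atTop (𝓝 z) := by
    simpa using (hc.mul_const (z - s)).add hd
  calc (z : EReal) = liminf (fun n => ((c n * (z - s) + d n : ℝ) : EReal)) atTop :=
        (continuous_coe_real_ereal.tendsto _ |>.comp hlim).liminf_eq.symm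
    _ ≤ liminf (fun n => ((c n * w n + d n : ℝ) : EReal)) atTop := by
        refine liminf_le_liminf ?_
        filter_upwards [eventually_lt_of_lt_liminf hw, hc.eventually (lt_mem_nhds zero_lt_one)]
          with n hwn hcn
        exact EReal.coe_le_coe_iff.2 (by gcongr; exact EReal.coe_lt_coe_iff.1 hwn |>.le)

lemma tendsto_affine_inverse (hc : Tendsto c atTop (𝓝 1)) (hd : Tendsto d atTop (𝓝 s)) :
    Tendsto (fun n => (c n)⁻¹) atTop (𝓝 1) ∧ Tendsto (fun n => -(d n / c n)) atTop (𝓝 (-s)) :=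
  ⟨by simpa using hc.inv₀ one_ne_zero, by simpa using (hd.div hc one_ne_zero).neg⟩

lemma eventually_eq_affine_inverse (hc : Tendsto c atTop (𝓝 1)) (w : ℕ → ℝ) :
    ∀ᶠ n in atTop, w n = (c n)⁻¹ * (c n * w n + d n) + -(d n / c n) := by
  filter_upwards [hc.eventually_ne one_ne_zero] with n hn
  field_simp
  ring

lemma limsup_affine (hc : Tendsto c atTop (𝓝 1)) (hd : Tendsto d atTop (𝓝 s)) (w : ℕ → ℝ) :
    limsup (fun n => ((c n * w n + d n : ℝ) : EReal)) atTop =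
      s + limsup (fun n => (w n : EReal)) atTop := by
  refine le_antisymm (limsup_affine_le hc hd w) ?_
  obtain ⟨hc', hd'⟩ := tendsto_affine_inverse hc hd
  calc (s : EReal) + limsup (fun n => (w n : EReal)) atTop
      = s + limsup (fun n => (((c n)⁻¹ * (c n * w n + d n) + -(d n / c n) : ℝ) : EReal)) atTop := by
        congr 1
        exact limsup_congr ((eventually_eq_affine_inverse hc w).mono fun n h => congrArg _ h)
    _ ≤ s + ((-s : ℝ) + limsup (fun n => ((c n * w n + d n : ℝ) : EReal)) atTop) := by
        gcongr
        exact limsup_affine_le hc' hd' _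
    _ = _ := EReal.coe_add_neg_add_cancel _ _

lemma liminf_affine (hc : Tendsto c atTop (𝓝 1)) (hd : Tendsto d atTop (𝓝 s)) (w : ℕ → ℝ) :
    liminf (fun n => ((c n * w n + d n : ℝ) : EReal)) atTop =
      s + liminf (fun n => (w n : EReal)) atTop := by
  refine le_antisymm ?_ (le_liminf_affine hc hd w)
  obtain ⟨hc', hd'⟩ := tendsto_affine_inverse hc hd
  calc liminf (fun n => ((c n * w n + d n : ℝ) : EReal)) atTop
      = s + ((-s : ℝ) + liminf (fun n => ((c n * w n + d n : ℝ) : EReal)) atTop) :=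
        (EReal.coe_add_neg_add_cancel _ _).symm
    _ ≤ s + liminf (fun n => (((c n)⁻¹ * (c n * w n + d n) + -(d n / c n) : ℝ) : EReal)) atTop := by
        gcongr
        exact le_liminf_affine hc' hd' _
    _ = s + liminf (fun n => (w n : EReal)) atTop := by
        congr 1
        exact liminf_congr ((eventually_eq_affine_inverse hc w).mono fun n h => congrArg _ h.symm)

end Affine

def cumEnergy (a : ℕ → ℤ) (n : ℕ) : ℝ := ∑ i ∈ Finset.range n, (EL a (i + 1) : ℝ)

section Prepend

variable (L : List ℤ) (a : ℕ → ℤ)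

lemma sum_range_length_prependSeq : ∑ i ∈ Finset.range L.length, prependSeq L a i = L.sum := by
  rw [← Fin.sum_univ_eq_sum_range, ← List.sum_ofFn]
  congr
  exact List.ext_get (by simp) fun _ _ _ => by simp [prependSeq]

lemma prependSeq_length_add (m : ℕ) : prependSeq L a (L.length + m) = a m := by
  simp [prependSeq]

lemma EL_prependSeq_length_add (m : ℕ) :
    EL (prependSeq L a) (L.length + m) = L.sum + EL a m := by
  simp only [EL, Finset.sum_range_add, sum_range_length_prependSeq, prependSeq_length_add]

lemma cumEnergy_prependSeq_length_add (n : ℕ) :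
    cumEnergy (prependSeq L a) (L.length + n) =
      cumEnergy (prependSeq L a) L.length + n * L.sum + cumEnergy a n := by
  simp only [cumEnergy, Finset.sum_range_add, add_assoc, EL_prependSeq_length_add, Int.cast_add,
    Finset.sum_add_distrib, Finset.sum_const, Finset.card_range, nsmul_eq_mul]

end Prepend

/-- Average-energy prefix lemma: prepending a finite prefix shifts the average-energy
by the energy level (sum) of that prefix. -/
theorem AE_prepend (L : List ℤ) (a : ℕ → ℤ) :
    AEsup (prependSeq L a) = ((L.sum : ℝ) : EReal) + AEsup a ∧
    AEinf (prependSeq L a) = ((L.sum : ℝ) : EReal) + AEinf a := by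
  set k := L.length
  set C := cumEnergy (prependSeq L a) k
  set c : ℕ → ℝ := fun n => n / (n + k)
  set d : ℕ → ℝ := fun n => (C / n + L.sum) * c n
  have hc : Tendsto c atTop (𝓝 1) := tendsto_natCast_div_add_atTop (k : ℝ)
  have hd : Tendsto d atTop (𝓝 (L.sum : ℝ)) := by
    have h := ((tendsto_const_div_atTop_nhds_zero_nat C).add_const (L.sum : ℝ)).mul hc
    rwa [zero_add, mul_one] at h
  have hshift : ∀ᶠ n in atTop, cumEnergy (prependSeq L a) (n + k) / (n + k : ℕ) =
      c n * (cumEnergy a n / n) + d n := by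
    filter_upwards [eventually_ne_atTop 0] with n hn
    rw [add_comm n k, cumEnergy_prependSeq_length_add]
    simp only [c, d]
    push_cast
    field_simp
    ring
  constructor
  · calc AEsup (prependSeq L a)
        = limsup (fun n => ((cumEnergy (prependSeq L a) (n + k) / (n + k : ℕ) : ℝ) : EReal))
            atTop :=
          (limsup_nat_add _ k).symm
      _ = limsup (fun n => ((c n * (cumEnergy a n / n) + d n : ℝ) : EReal)) atTop :=
          limsup_congr (hshift.mono fun n h => congrArg _ h)
      _ = _ := limsup_affine hc hd _
  · calc AEinf (prependSeq L a)
        = liminf (fun n => ((cumEnergy (prependSeq L a) (n + k) / (n + k : ℕ) : ℝ) : EReal))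
            atTop :=
          (liminf_nat_add _ k).symm
      _ = liminf (fun n => ((c n * (cumEnergy a n / n) + d n : ℝ) : EReal)) atTop :=
          liminf_congr (hshift.mono fun n h => congrArg _ h)
      _ = _ := liminf_affine hc hd _

end
end

section
/- Let ℓ ≥ 1 and let c₀, …, c_{ℓ−1} be integers with Σ_{i<ℓ} c_i = 0, and let a : ℕ → ℤ be the ℓ-periodic sequence a(n) = c_{n mod ℓ}. Then AEsup(a) = AEinf(a) = (1/ℓ)·Σ_{i=1}^{ℓ} EL(a, i), i.e., the average-energy of the infinite repetition of a zero-sum cycle equals the average of the partial sums over one period. -/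
/-
Subtracting the mean `m` of one period from an `ℓ`-periodic sequence leaves a periodic sequence
with zero sum over a period, whose partial sums are therefore periodic and hence bounded. So the
`n`-th partial sum is `n * m + O(1)` and the Cesàro averages converge to `m`. For a zero-sum cycle
the energy levels are themselves `ℓ`-periodic, so this applies to them.
-/

open Filter

noncomputable section

open Function Finset

theorem Function.Periodic.sum_range_add_period {M : Type*} [AddCommMonoid M] {f : ℕ → M}
    {ℓ : ℕ} (hf : Periodic f ℓ) (n : ℕ) :
    ∑ i ∈ range (n + ℓ), f i = ∑ i ∈ range n, f i + ∑ i ∈ range ℓ, f i := by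
  induction n with
  | zero => simp
  | succ n ih =>
    rw [Nat.add_right_comm, sum_range_succ, ih, sum_range_succ, hf n, add_right_comm]

theorem Function.Periodic.periodic_sum_range {M : Type*} [AddCommMonoid M] {f : ℕ → M}
    {ℓ : ℕ} (hf : Periodic f ℓ) (hsum : ∑ i ∈ range ℓ, f i = 0) :
    Periodic (fun n => ∑ i ∈ range n, f i) ℓ := fun n =>
  (hf.sum_range_add_period n).trans (by rw [hsum, add_zero])

theorem Function.Periodic.exists_abs_le {f : ℕ → ℝ} {ℓ : ℕ} (hf : Periodic f ℓ) (hℓ : 0 < ℓ) :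
    ∃ C, ∀ n, |f n| ≤ C :=
  ⟨∑ i ∈ range ℓ, |f i|, fun n => hf.map_mod_nat n ▸
    single_le_sum (fun i _ => abs_nonneg (f i)) (mem_range.2 (Nat.mod_lt n hℓ))⟩

theorem Function.Periodic.tendsto_sum_range_div {f : ℕ → ℝ} {ℓ : ℕ} (hf : Periodic f ℓ)
    (hℓ : 0 < ℓ) :
    Tendsto (fun n : ℕ => (∑ i ∈ range n, f i) / n) atTop
      (nhds ((∑ i ∈ range ℓ, f i) / ℓ)) := by
  set m := (∑ i ∈ range ℓ, f i) / ℓ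
  have hℓ' : (ℓ : ℝ) ≠ 0 := by positivity
  have hcentered : ∑ i ∈ range ℓ, (f i - m) = 0 := by
    simp only [sum_sub_distrib, sum_const, card_range, nsmul_eq_mul, m]
    field_simp
    ring
  obtain ⟨C, hC⟩ := ((hf.comp (· - m)).periodic_sum_range hcentered).exists_abs_le hℓ
  have herror : Tendsto (fun n : ℕ => (∑ i ∈ range n, (f i - m)) / n) atTop (nhds 0) := by
    refine squeeze_zero_norm (fun n => ?_) (tendsto_const_div_atTop_nhds_zero_nat C)
    rw [Real.norm_eq_abs, abs_div, Nat.abs_cast]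
    exact div_le_div_of_nonneg_right (hC n) n.cast_nonneg
  have hsplit : ∀ᶠ n : ℕ in atTop,
      m + (∑ i ∈ range n, (f i - m)) / n = (∑ i ∈ range n, f i) / n := by
    filter_upwards [eventually_ne_atTop 0] with n hn
    have hn' : (n : ℝ) ≠ 0 := Nat.cast_ne_zero.2 hn
    simp only [sum_sub_distrib, sum_const, card_range, nsmul_eq_mul]
    field_simp
    ring
  simpa using (tendsto_const_nhds.add herror).congr' hsplit

/-- The average-energy of the infinite repetition of a zero-sum cycle `c 0, …, c (ℓ-1)` equals
the average of the partial sums over one period; moreover the limsup and liminf variants agree. -/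
theorem AE_periodic_zero_cycle (ℓ : ℕ) (hℓ : 1 ≤ ℓ) (c : ℕ → ℤ)
    (hsum : ∑ i ∈ Finset.range ℓ, c i = 0)
    (a : ℕ → ℤ) (ha : ∀ n, a n = c (n % ℓ)) :
    AEsup a = (((∑ i ∈ Finset.range ℓ, (EL a (i + 1) : ℝ)) / ℓ : ℝ) : EReal) ∧
    AEinf a = (((∑ i ∈ Finset.range ℓ, (EL a (i + 1) : ℝ)) / ℓ : ℝ) : EReal) := by
  have hperiodic : Periodic a ℓ := fun n => by rw [ha, ha, Nat.add_mod_right]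
  have hcycle : ∑ i ∈ range ℓ, a i = 0 := by
    rw [← hsum]
    exact sum_congr rfl fun i hi => by rw [ha, Nat.mod_eq_of_lt (mem_range.1 hi)]
  have hEL : Periodic (fun n => (EL a (n + 1) : ℝ)) ℓ :=
    ((hperiodic.periodic_sum_range hcycle).add_const 1).comp _
  have hlim := EReal.tendsto_coe.2 (hEL.tendsto_sum_range_div hℓ)
  exact ⟨hlim.limsup_eq, hlim.liminf_eq⟩

end
end

section
/- Let a : ℕ → ℤ be a sequence decomposed into consecutive zero-sum blocks of bounded length, via cut points 0 = n₀ < n₁ < n₂ < … with EL(a, n_k) = 0 for all k and n_k − n_{k−1} ≤ ℓ for all k ≥ 1 (for a fixed ℓ ≥ 1). Then inf_{k≥1} A_k ≤ AEsup(a), where A_k = (1/L_k)·Σ_{j=n_{k−1}+1}^{n_k} EL(a, j) and L_k = n_k − n_{k−1}; i.e., repeating the best block forever yields an average-energy no larger than that of a. -/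
open Filter

noncomputable section

/-!
The running sum `∑_{i=1}^{n_K} EL(a, i)` splits into the block sums, and the block lengths add
up to `n_K`. So the average over the first `n_K` positions is a mediant of the block averages,
hence at least the smallest of them. Cut points are unbounded, so this bounds the average from
below infinitely often, which is enough for the limsup.
-/

namespace Finset

theorem sum_range_add_one_eq_sum_Ioc {M : Type*} [AddCommMonoid M] (f : ℕ → M) (m : ℕ) :
    ∑ i ∈ range m, f (i + 1) = ∑ j ∈ Ioc 0 m, f j := by
  rw [range_eq_Ico, sum_Ico_add', Ico_add_one_add_one_eq_Ioc]

theorem sum_Ioc_eq_sum_blocks {M : Type*} [AddCommMonoid M] (f : ℕ → M) {n : ℕ → ℕ}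
    (hn : Monotone n) (K : ℕ) :
    ∑ j ∈ Ioc (n 0) (n K), f j = ∑ k ∈ range K, ∑ j ∈ Ioc (n k) (n (k + 1)), f j := by
  induction K with
  | zero => simp
  | succ K ih =>
    rw [sum_range_succ, ← ih, sum_Ioc_consecutive _ (hn K.zero_le) (hn K.le_succ)]

theorem exists_div_le_sum_div {ι 𝕜 : Type*} [Field 𝕜] [LinearOrder 𝕜] [IsStrictOrderedRing 𝕜]
    {s : Finset ι} (hs : s.Nonempty) (S L : ι → 𝕜) (hL : ∀ i ∈ s, 0 < L i) :
    ∃ i ∈ s, S i / L i ≤ (∑ j ∈ s, S j) / ∑ j ∈ s, L j := by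
  have hsum : 0 < ∑ j ∈ s, L j := sum_pos hL hs
  set r := (∑ j ∈ s, S j) / ∑ j ∈ s, L j
  have hmediant : ∑ j ∈ s, S j ≤ ∑ j ∈ s, r * L j := by
    rw [← mul_sum, div_mul_cancel₀ _ hsum.ne']
  obtain ⟨i, hi, hle⟩ := exists_le_of_sum_le hs hmediant
  exact ⟨i, hi, (div_le_iff₀ (hL i hi)).2 hle⟩

end Finset

open Finset in
theorem exists_block_average_le_average (f : ℕ → ℝ) {n : ℕ → ℕ} (hn : StrictMono n)
    (h0 : n 0 = 0) {K : ℕ} (hK : 0 < K) :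
    ∃ k < K, (∑ j ∈ Ioc (n k) (n (k + 1)), f j) / ((n (k + 1) - n k : ℕ) : ℝ) ≤
      (∑ i ∈ range (n K), f (i + 1)) / n K := by
  have hlen : ∑ k ∈ range K, ((n (k + 1) - n k : ℕ) : ℝ) = n K := by
    rw [← Nat.cast_sum, sum_range_tsub hn.monotone, h0, Nat.sub_zero]
  have hsum : ∑ i ∈ range (n K), f (i + 1) =
      ∑ k ∈ range K, ∑ j ∈ Ioc (n k) (n (k + 1)), f j := by
    rw [sum_range_add_one_eq_sum_Ioc, ← h0, sum_Ioc_eq_sum_blocks f hn.monotone]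
  obtain ⟨k, hk, hle⟩ := exists_div_le_sum_div (nonempty_range_iff.2 hK.ne')
    (fun k => ∑ j ∈ Ioc (n k) (n (k + 1)), f j) (fun k => ((n (k + 1) - n k : ℕ) : ℝ))
    fun k _ => Nat.cast_pos.2 (Nat.sub_pos_of_lt (hn k.lt_succ_self))
  rw [hlen, ← hsum] at hle
  exact ⟨k, mem_range.1 hk, hle⟩

theorem AE_best_block_general (a : ℕ → ℤ) (n : ℕ → ℕ)
    (h0 : n 0 = 0) (hmono : StrictMono n) :
    (⨅ k : ℕ, (((∑ j ∈ Finset.Ioc (n k) (n (k + 1)), (EL a j : ℝ)) /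
        ((n (k + 1) - n k : ℕ) : ℝ) : ℝ) : EReal)) ≤ AEsup a := by
  refine le_limsup_of_frequently_le (frequently_atTop.2 fun N => ?_) (by isBoundedDefault)
  obtain ⟨k, -, hk⟩ :=
    exists_block_average_le_average (fun j => (EL a j : ℝ)) hmono h0 N.succ_pos
  exact ⟨n (N + 1), N.le_succ.trans hmono.le_apply,
    (iInf_le _ k).trans (EReal.coe_le_coe_iff.2 hk)⟩

/-- Repeating the best block gives the lowest average-energy: for a sequence decomposed into
consecutive zero-sum blocks of bounded length, the infimum of the block average-energies
is at most the average-energy of the whole sequence.  The `k`-th block (between cut points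
`n k` and `n (k+1)`) has average-energy
`A k = (∑ j ∈ Ioc (n k) (n (k+1)), EL a j) / (n (k+1) - n k)`. -/
theorem AE_best_block (a : ℕ → ℤ) (n : ℕ → ℕ) (ℓ : ℕ) (hℓ : 1 ≤ ℓ)
    (h0 : n 0 = 0) (hmono : StrictMono n)
    (hzero : ∀ k, EL a (n k) = 0)
    (hlen : ∀ k, n (k + 1) - n k ≤ ℓ) :
    (⨅ k : ℕ, (((∑ j ∈ Finset.Ioc (n k) (n (k + 1)), (EL a j : ℝ)) /
        ((n (k + 1) - n k : ℕ) : ℝ) : ℝ) : EReal)) ≤ AEsup a :=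
  AE_best_block_general a n h0 hmono

end
end

section
/- Let G be a game and s₀ an initial state. If there exists a rational t < 0 such that player 1 has a winning strategy from s₀ for MeanPayOff(t), then player 1 has a memoryless strategy from s₀ such that every play π consistent with it satisfies AEinf(π) = AEsup(π) = −∞; in particular this memoryless strategy is winning for AvgEnergyLevel(t') for every t' ∈ ℚ. -/
open Filter

noncomputable section

/-- A two-player turn-based game on a (finite) state space `S`: `p1 s` holds iff state `s`
belongs to player 1 (otherwise it belongs to player 2), `E` is the edge relation (every state
has a successor), and `w` assigns an integer weight to every edge. -/
structure Game (S : Type) where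
  p1 : S → Prop
  E : S → S → Prop
  w : S → S → ℤ
  succ : ∀ s, ∃ t, E s t

variable {S : Type}

/-- `π` is a play of `G` starting from `s₀`. -/
def IsPlay (G : Game S) (s₀ : S) (π : ℕ → S) : Prop :=
  π 0 = s₀ ∧ ∀ n, G.E (π n) (π (n + 1))

/-- Energy level of the play `π` at position `n`. -/
def ELp (G : Game S) (π : ℕ → S) (n : ℕ) : ℤ :=
  ∑ i ∈ Finset.range n, G.w (π i) (π (i + 1))

/-- Average-energy of a play (limsup variant), in the extended reals. -/
def AEsupP (G : Game S) (π : ℕ → S) : EReal :=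
  limsup (fun n : ℕ => (((∑ i ∈ Finset.range n, (ELp G π (i + 1) : ℝ)) / n : ℝ) : EReal)) atTop

/-- Average-energy of a play (liminf variant). -/
def AEinfP (G : Game S) (π : ℕ → S) : EReal :=
  liminf (fun n : ℕ => (((∑ i ∈ Finset.range n, (ELp G π (i + 1) : ℝ)) / n : ℝ) : EReal)) atTop

/-- Mean-payoff of a play (limsup variant). -/
def MPsupP (G : Game S) (π : ℕ → S) : EReal :=
  limsup (fun n : ℕ => (((ELp G π n : ℝ) / n : ℝ) : EReal)) atTop

/-- Total-payoff of a play (limsup variant). -/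
def TPsupP (G : Game S) (π : ℕ → S) : EReal :=
  limsup (fun n : ℕ => ((ELp G π n : ℝ) : EReal)) atTop

/-- The history (finite prefix) `π 0, …, π n` of a play, as a list. -/
def hist (π : ℕ → S) (n : ℕ) : List S := List.ofFn (fun i : Fin (n + 1) => π i)

/-- A (deterministic) strategy for player 1: on every nonempty finite path of `G` ending in a
player-1 state, it prescribes an `E`-successor of the last state. -/
def IsStrat1 (G : Game S) (σ : List S → S) : Prop :=
  ∀ (ρ : List S) (h : ρ ≠ []), List.Chain' G.E ρ → G.p1 (ρ.getLast h) →
    G.E (ρ.getLast h) (σ ρ)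

/-- A strategy for player 2 (who owns the states where `p1` fails). -/
def IsStrat2 (G : Game S) (σ : List S → S) : Prop :=
  ∀ (ρ : List S) (h : ρ ≠ []), List.Chain' G.E ρ → ¬ G.p1 (ρ.getLast h) →
    G.E (ρ.getLast h) (σ ρ)

/-- A strategy is memoryless if its choice only depends on the last state of the history. -/
def Memoryless (σ : List S → S) : Prop :=
  ∀ (ρ ρ' : List S) (h : ρ ≠ []) (h' : ρ' ≠ []),
    ρ.getLast h = ρ'.getLast h' → σ ρ = σ ρ'

/-- The play `π` is consistent with the player-1 strategy `σ`. -/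
def Consistent1 (G : Game S) (σ : List S → S) (π : ℕ → S) : Prop :=
  ∀ n, G.p1 (π n) → π (n + 1) = σ (hist π n)

/-- The play `π` is consistent with the player-2 strategy `σ`. -/
def Consistent2 (G : Game S) (σ : List S → S) (π : ℕ → S) : Prop :=
  ∀ n, ¬ G.p1 (π n) → π (n + 1) = σ (hist π n)

/-- `σ` is a winning strategy for player 1 from `s₀` for the objective `Obj`:
every consistent play from `s₀` belongs to `Obj`. -/
def Winning1 (G : Game S) (s₀ : S) (σ : List S → S) (Obj : (ℕ → S) → Prop) : Prop :=
  IsStrat1 G σ ∧ ∀ π, IsPlay G s₀ π → Consistent1 G σ π → Obj π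

/-- `σ` is a winning strategy for player 2 from `s₀` against the objective `Obj`:
every consistent play from `s₀` lies outside `Obj`. -/
def Winning2 (G : Game S) (s₀ : S) (σ : List S → S) (Obj : (ℕ → S) → Prop) : Prop :=
  IsStrat2 G σ ∧ ∀ π, IsPlay G s₀ π → Consistent2 G σ π → ¬ Obj π

/-- Average-energy objective: the average-energy of the play is at most `t`. -/
def AvgEnergyLevel (G : Game S) (t : ℚ) : (ℕ → S) → Prop :=
  fun π => AEsupP G π ≤ ((t : ℝ) : EReal)

/-- Mean-payoff objective: the mean-payoff of the play is at most `t`. -/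
def MeanPayOff (G : Game S) (t : ℚ) : (ℕ → S) → Prop :=
  fun π => MPsupP G π ≤ ((t : ℝ) : EReal)

/-- Total-payoff objective: the total-payoff of the play is at most `t`. -/
def TotalPayOff (G : Game S) (t : ℤ) : (ℕ → S) → Prop :=
  fun π => TPsupP G π ≤ ((t : ℝ) : EReal)

/-- Lower-bounded energy objective with initial credit `c₀`. -/
def LowerObj (G : Game S) (c₀ : ℕ) : (ℕ → S) → Prop :=
  fun π => ∀ n, 0 ≤ (c₀ : ℤ) + ELp G π n

/-- Lower- and upper-bounded energy objective with upper bound `U` and initial credit `c₀`. -/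
def LUObj (G : Game S) (U c₀ : ℕ) : (ℕ → S) → Prop :=
  fun π => ∀ n, 0 ≤ (c₀ : ℤ) + ELp G π n ∧ (c₀ : ℤ) + ELp G π n ≤ (U : ℤ)


/-!
Reweight the edges by `u = 2·den τ·w - num τ`: plays consistent with the given strategy then have
`u`-mean-payoff at most `num τ < 0`. Call a state unbounded if player 2 can force arbitrarily
large finite `u`-gains from it.

From a bounded state, the largest gain player 2 can force is a potential that player 1 keeps from
growing faster than `-u` by a memoryless choice. So the `u`-energy stays bounded, the `w`-energy
decreases linearly and the average energy tends to `-∞`.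

From an unbounded state, player 2 can force any gain without ever leaving the unbounded states,
because the gains forceable from the finitely many bounded ones are uniformly bounded. Forcing a
gain again and again, he builds against any strategy a play whose `u`-energy is positive
infinitely often, contradicting the mean-payoff bound.
-/

theorem List.getLastD_eq_getLast {α : Type*} {l : List α} (h : l ≠ []) (d : α) :
    l.getLastD d = l.getLast h := by
  simp [List.getLast?_eq_some_getLast h]

theorem hist_ne_nil (π : ℕ → S) (n : ℕ) : hist π n ≠ [] := by
  simp [hist]

theorem hist_getLast (π : ℕ → S) (n : ℕ) : (hist π n).getLast (hist_ne_nil π n) = π n := by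
  simp only [hist, List.getLast_ofFn, Nat.add_sub_cancel]

theorem hist_getLastD (π : ℕ → S) (n : ℕ) (d : S) : (hist π n).getLastD d = π n := by
  rw [List.getLastD_eq_getLast (hist_ne_nil π n), hist_getLast]

theorem hist_congr {x y : ℕ → S} {n : ℕ} (h : ∀ i ≤ n, x i = y i) : hist x n = hist y n :=
  List.ofFn_inj.mpr (funext fun i => h i (Nat.lt_succ_iff.mp i.2))

theorem ELp_succ (G : Game S) (π : ℕ → S) (n : ℕ) :
    ELp G π (n + 1) = ELp G π n + G.w (π n) (π (n + 1)) :=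
  Finset.sum_range_succ _ _

theorem ELp_congr (G : Game S) {x y : ℕ → S} {n : ℕ} (h : ∀ i ≤ n, x i = y i) :
    ELp G x n = ELp G y n :=
  Finset.sum_congr rfl fun i hi => by
    rw [Finset.mem_range] at hi
    rw [h i hi.le, h (i + 1) hi]

/-- `d` is only read on the empty history. -/
def strategyOfMove (f : S → S) (d : S) : List S → S := fun ρ => f (ρ.getLastD d)

theorem memoryless_strategyOfMove (f : S → S) (d : S) : Memoryless (strategyOfMove f d) := by
  intro ρ ρ' h h' hlast
  simp only [strategyOfMove, List.getLastD_eq_getLast h, List.getLastD_eq_getLast h', hlast]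

theorem isStrat1_strategyOfMove (G : Game S) {f : S → S} (hf : ∀ s, G.p1 s → G.E s (f s))
    (d : S) : IsStrat1 G (strategyOfMove f d) := by
  intro ρ h _ hp
  rw [strategyOfMove, List.getLastD_eq_getLast h]
  exact hf _ hp

theorem consistent1_strategyOfMove {G : Game S} {f : S → S} {d : S} {π : ℕ → S} :
    Consistent1 G (strategyOfMove f d) π ↔ ∀ n, G.p1 (π n) → π (n + 1) = f (π n) := by
  simp only [Consistent1, strategyOfMove, hist_getLastD]

def ConsistentUpTo (G : Game S) (σ : List S → S) (x : ℕ → S) (n : ℕ) : Prop :=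
  ∀ i < n, G.E (x i) (x (i + 1)) ∧ (G.p1 (x i) → x (i + 1) = σ (hist x i))

def snoc (x : ℕ → S) (n : ℕ) (t : S) : ℕ → S := fun i => if i ≤ n then x i else t

section ConsistentUpTo

variable {G : Game S} {σ : List S → S} {x : ℕ → S} {n : ℕ}

theorem ConsistentUpTo.congr {y : ℕ → S} {m : ℕ} (hx : ConsistentUpTo G σ x n) (hm : m ≤ n)
    (h : ∀ i ≤ m, x i = y i) : ConsistentUpTo G σ y m := by
  intro i hi
  rw [← h i hi.le, ← h (i + 1) hi, ← hist_congr fun j hj => h j (hj.trans hi.le)]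
  exact hx i (hi.trans_le hm)

theorem ConsistentUpTo.isChain (hx : ConsistentUpTo G σ x n) : List.IsChain G.E (hist x n) :=
  List.isChain_ofFn.mpr fun i hi => (hx i (by omega)).1

theorem ConsistentUpTo.extend {t : S} (hx : ConsistentUpTo G σ x n) (ht : G.E (x n) t)
    (hσ : G.p1 (x n) → t = σ (hist x n)) : ConsistentUpTo G σ (snoc x n t) (n + 1) := by
  have hagree : ∀ i ≤ n, x i = snoc x n t i := fun i hi => (if_pos hi).symm
  have hlast : snoc x n t (n + 1) = t := if_neg (by omega)
  intro i hi
  rcases Nat.lt_succ_iff_lt_or_eq.mp hi with hi | rfl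
  · exact hx.congr le_rfl hagree i hi
  · rw [hlast, ← hagree i le_rfl, ← hist_congr hagree]
    exact ⟨ht, hσ⟩

end ConsistentUpTo

theorem ELp_snoc (G : Game S) (x : ℕ → S) (n : ℕ) (t : S) :
    ELp G (snoc x n t) (n + 1) = ELp G x n + G.w (x n) t := by
  have hagree : ∀ i ≤ n, x i = snoc x n t i := fun i hi => (if_pos hi).symm
  rw [ELp_succ, ← ELp_congr G hagree, ← hagree n le_rfl, snoc, if_neg (by omega)]

theorem exists_limit_of_forall_exists_extension {α : Type*} (Good : (ℕ → α) → ℕ → Prop)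
    (hext : ∀ x n, Good x n → ∃ x' n', n < n' ∧ (∀ i ≤ n, x' i = x i) ∧ Good x' n')
    {x₀ : ℕ → α} {n₀ : ℕ} (h₀ : Good x₀ n₀) :
    ∃ π : ℕ → α, ∀ N, ∃ x n, N ≤ n ∧ Good x n ∧ ∀ i ≤ n, π i = x i := by
  choose! f g hfg using hext
  let seq : ℕ → (ℕ → α) × ℕ := fun j => Nat.rec (x₀, n₀) (fun _ p => (f p.1 p.2, g p.1 p.2)) j
  have hgood : ∀ j, Good (seq j).1 (seq j).2 := by
    intro j
    induction j with
    | zero => exact h₀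
    | succ j ih => exact (hfg _ _ ih).2.2
  have hlt : ∀ j, (seq j).2 < (seq (j + 1)).2 := fun j => (hfg _ _ (hgood j)).1
  have hge : ∀ j, j ≤ (seq j).2 := fun j => by
    induction j with
    | zero => exact Nat.zero_le _
    | succ j ih => exact ih.trans_lt (hlt j)
  have hagree : ∀ j k, ∀ i ≤ (seq j).2, (seq (j + k)).1 i = (seq j).1 i := by
    intro j k
    induction k with
    | zero => exact fun _ _ => rfl
    | succ k ih =>
      intro i hi
      have hmono : (seq j).2 ≤ (seq (j + k)).2 :=
        (strictMono_nat_of_lt_succ hlt).monotone (Nat.le_add_right j k)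
      exact ((hfg _ _ (hgood (j + k))).2.1 i (hi.trans hmono)).trans (ih i hi)
  -- The diagonal `i ↦ (seq i).1 i` agrees with every `(seq N).1` up to `(seq N).2 ≥ N`.
  refine ⟨fun i => (seq i).1 i, fun N => ⟨(seq N).1, (seq N).2, hge N, hgood N, fun i hi => ?_⟩⟩
  rcases le_total i N with hiN | hNi
  · obtain ⟨k, rfl⟩ := Nat.exists_eq_add_of_le hiN
    exact (hagree i k i (hge i)).symm
  · obtain ⟨k, rfl⟩ := Nat.exists_eq_add_of_le hNi
    exact hagree N k _ hi

namespace Game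

variable (G : Game S)

/-- `G.Forces P s c`: from `s`, player 2 can force the energy level to rise by at least `c`
within finitely many steps, while moving only to states satisfying `P`. -/
inductive Forces (P : S → Prop) : S → ℤ → Prop
  | of_nonpos {s : S} {c : ℤ} : c ≤ 0 → Forces P s c
  | p1 {s : S} {c : ℤ} : G.p1 s → (∀ t, G.E s t → Forces P t (c - G.w s t)) → Forces P s c
  | p2 {s t : S} {c : ℤ} : ¬ G.p1 s → G.E s t → P t → Forces P t (c - G.w s t) → Forces P s c

def Unbounded (P : S → Prop) (s : S) : Prop := ∀ c, G.Forces P s c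

variable {G} {P : S → Prop} {s t s₀ : S} {c d : ℤ} {σ : List S → S}

theorem Forces.mono (h : G.Forces P s c) (hdc : d ≤ c) : G.Forces P s d := by
  induction h generalizing d with
  | of_nonpos hc => exact .of_nonpos (hdc.trans hc)
  | p1 hp _ ih => exact .p1 hp fun t ht => ih t ht (by omega)
  | p2 hp ht hPt _ ih => exact .p2 hp ht hPt (ih (by omega))

theorem Forces.of_p1 (h : G.Forces P s c) (hc : 0 < c) (hp : G.p1 s) (ht : G.E s t) :
    G.Forces P t (c - G.w s t) := by
  cases h with
  | of_nonpos hc' => omega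
  | p1 _ h => exact h t ht
  | p2 hp' => exact absurd hp hp'

theorem Unbounded.of_p1 (hs : G.Unbounded P s) (hp : G.p1 s) (ht : G.E s t) :
    G.Unbounded P t := fun c =>
  ((hs (max (c + G.w s t) 1)).of_p1 (by omega) hp ht).mono (by omega)

theorem exists_forces_not_forces_succ (hs : ¬ G.Unbounded P s) :
    ∃ k : ℕ, G.Forces P s k ∧ ¬ G.Forces P s (k + 1) := by
  by_contra! hsucc
  refine hs fun c => ?_
  have hall : ∀ k : ℕ, G.Forces P s k := fun k => by
    induction k with
    | zero => exact .of_nonpos le_rfl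
    | succ k ih => exact_mod_cast hsucc k ih
  exact (hall c.toNat).mono (Int.self_le_toNat c)

open Classical in
variable (G) in
/-- The largest gain player 2 can force from `s`; junk value `0` on unbounded states. -/
def potential (P : S → Prop) (s : S) : ℕ :=
  if hs : G.Unbounded P s then 0 else (exists_forces_not_forces_succ hs).choose

theorem forces_potential (hs : ¬ G.Unbounded P s) : G.Forces P s (G.potential P s) := by
  rw [potential, dif_neg hs]
  exact (exists_forces_not_forces_succ hs).choose_spec.1

theorem not_forces_potential_add_one (hs : ¬ G.Unbounded P s) :
    ¬ G.Forces P s (G.potential P s + 1) := by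
  rw [potential, dif_neg hs]
  exact (exists_forces_not_forces_succ hs).choose_spec.2

theorem le_potential (hs : ¬ G.Unbounded P s) (h : G.Forces P s c) : c ≤ G.potential P s := by
  by_contra! hlt
  exact not_forces_potential_add_one hs (h.mono (by omega))

theorem potential_lt_of_not_forces (h : ¬ G.Forces P s c) :
    ¬ G.Unbounded P s ∧ G.potential P s < c := by
  have hs : ¬ G.Unbounded P s := fun hs => h (hs c)
  refine ⟨hs, ?_⟩
  by_contra! hle
  exact h ((forces_potential hs).mono hle)

theorem exists_potential_step_of_p1 (hs : ¬ G.Unbounded P s) (hp : G.p1 s) :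
    ∃ t, G.E s t ∧ ¬ G.Unbounded P t ∧ G.potential P t + G.w s t ≤ G.potential P s := by
  obtain ⟨t, ht, hnot⟩ : ∃ t, G.E s t ∧ ¬ G.Forces P t (G.potential P s + 1 - G.w s t) := by
    by_contra! h
    exact not_forces_potential_add_one hs (.p1 hp h)
  obtain ⟨htb, hlt⟩ := potential_lt_of_not_forces hnot
  exact ⟨t, ht, htb, by omega⟩

theorem potential_step_of_not_p1 (hs : ¬ G.Unbounded P s) (hp : ¬ G.p1 s) (ht : G.E s t)
    (hPt : P t) : ¬ G.Unbounded P t ∧ G.potential P t + G.w s t ≤ G.potential P s := by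
  have hnot : ¬ G.Forces P t (G.potential P s + 1 - G.w s t) := fun h =>
    not_forces_potential_add_one hs (.p2 hp ht hPt h)
  obtain ⟨htb, hlt⟩ := potential_lt_of_not_forces hnot
  exact ⟨htb, by omega⟩

theorem Unbounded.restrict [Finite S] (hs : G.Unbounded ⊤ s) :
    G.Unbounded (G.Unbounded ⊤) s := by
  set W := G.Unbounded ⊤
  obtain ⟨B, hB⟩ :=
    (Set.finite_range fun e : S × S => (G.potential ⊤ e.2 : ℤ) + G.w e.1 e.2).bddAbove
  have hB' : ∀ s t, (G.potential ⊤ t : ℤ) + G.w s t ≤ max B 0 := fun s t =>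
    (hB ⟨(s, t), rfl⟩).trans (le_max_left _ _)
  -- Outside `W` the gain is bounded by the unrestricted potential, inside it by the restricted one.
  have key : ∀ s c, G.Forces ⊤ s c → ¬ G.Unbounded W s → c ≤ G.potential W s + max B 0 := by
    intro s c hf
    induction hf with
    | of_nonpos hc => intro _; have := le_max_right B 0; omega
    | @p1 s c hp hforces ih =>
      intro hsW
      obtain ⟨t, ht, htW, hpot⟩ := exists_potential_step_of_p1 hsW hp
      by_cases htU : W t
      · have := ih t ht htW; omega
      · have := le_potential htU (hforces t ht); have := hB' s t; omega
    | @p2 s t c hp ht _ hforces ih =>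
      intro hsW
      by_cases htU : W t
      · obtain ⟨htW, hpot⟩ := potential_step_of_not_p1 hsW hp ht htU
        have := ih htW; omega
      · have := le_potential htU hforces; have := hB' s t; omega
  intro c
  by_contra hc
  obtain ⟨hsW, -⟩ := potential_lt_of_not_forces hc
  have := key s _ (hs (G.potential W s + max B 0 + 1)) hsW
  omega

open Classical in
variable (G) in
def boundedMove (s : S) : S :=
  if h : G.p1 s ∧ ¬ G.Unbounded ⊤ s then (exists_potential_step_of_p1 h.2 h.1).choose
  else (G.succ s).choose

theorem edge_boundedMove (s : S) : G.E s (G.boundedMove s) := by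
  unfold boundedMove
  split_ifs with h
  exacts [(exists_potential_step_of_p1 h.2 h.1).choose_spec.1, (G.succ s).choose_spec]

theorem potential_boundedMove (hp : G.p1 s) (hs : ¬ G.Unbounded ⊤ s) :
    ¬ G.Unbounded ⊤ (G.boundedMove s) ∧
      G.potential ⊤ (G.boundedMove s) + G.w s (G.boundedMove s) ≤ G.potential ⊤ s := by
  rw [boundedMove, dif_pos ⟨hp, hs⟩]
  exact (exists_potential_step_of_p1 hs hp).choose_spec.2

theorem ELp_le_potential {π : ℕ → S} (hs₀ : ¬ G.Unbounded ⊤ s₀) (hπ : IsPlay G s₀ π)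
    (hmove : ∀ n, G.p1 (π n) → π (n + 1) = G.boundedMove (π n)) (n : ℕ) :
    ELp G π n ≤ G.potential ⊤ s₀ := by
  suffices ∀ n, ¬ G.Unbounded ⊤ (π n) ∧ G.potential ⊤ (π n) + ELp G π n ≤ G.potential ⊤ s₀ by
    have := (this n).2; omega
  intro n
  induction n with
  | zero => simp [hπ.1, hs₀, ELp]
  | succ n ih =>
    obtain ⟨hbd, hle⟩ := ih
    have hstep : ¬ G.Unbounded ⊤ (π (n + 1)) ∧
        G.potential ⊤ (π (n + 1)) + G.w (π n) (π (n + 1)) ≤ G.potential ⊤ (π n) := by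
      by_cases hp : G.p1 (π n)
      · rw [hmove n hp]; exact potential_boundedMove hp hbd
      · exact potential_step_of_not_p1 hbd hp (hπ.2 n) trivial
    rw [ELp_succ]
    exact ⟨hstep.1, by omega⟩

theorem exists_memoryless_ELp_le (hs₀ : ¬ G.Unbounded ⊤ s₀) :
    ∃ σ, IsStrat1 G σ ∧ Memoryless σ ∧
      ∀ π, IsPlay G s₀ π → Consistent1 G σ π → ∀ n, ELp G π n ≤ G.potential ⊤ s₀ :=
  ⟨strategyOfMove G.boundedMove s₀, isStrat1_strategyOfMove G (fun s _ => edge_boundedMove s) s₀,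
    memoryless_strategyOfMove _ _, fun _ hπ hc =>
      ELp_le_potential hs₀ hπ (consistent1_strategyOfMove.mp hc)⟩

theorem Forces.exists_extension (hσ : IsStrat1 G σ)
    (hP : ∀ s t, G.p1 s → P s → G.E s t → P t) (hf : G.Forces P s c)
    (x : ℕ → S) (n : ℕ) (hxn : x n = s) (hPs : P s) (hx : ConsistentUpTo G σ x n) :
    ∃ x' n', n ≤ n' ∧ (∀ i ≤ n, x' i = x i) ∧ ConsistentUpTo G σ x' n' ∧ P (x' n') ∧
      c + ELp G x n ≤ ELp G x' n' := by
  induction hf generalizing x n with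
  | of_nonpos hc => exact ⟨x, n, le_rfl, fun _ _ => rfl, hx, hxn ▸ hPs, by omega⟩
  | @p1 s c hp _ ih =>
    subst hxn
    set t := σ (hist x n)
    have ht : G.E (x n) t := by
      simpa only [hist_getLast] using hσ _ (hist_ne_nil x n) hx.isChain (by rwa [hist_getLast])
    obtain ⟨x', n', hn, hagree, hx', hP', hgain⟩ :=
      ih t ht (snoc x n t) (n + 1) (if_neg (by omega)) (hP _ _ hp hPs ht)
        (hx.extend ht fun _ => rfl)
    refine ⟨x', n', by omega, fun i hi => (hagree i (by omega)).trans (if_pos hi), hx', hP', ?_⟩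
    rw [ELp_snoc] at hgain
    omega
  | @p2 s t c hp ht hPt _ ih =>
    subst hxn
    obtain ⟨x', n', hn, hagree, hx', hP', hgain⟩ :=
      ih (snoc x n t) (n + 1) (if_neg (by omega)) hPt (hx.extend ht fun h => absurd h hp)
    refine ⟨x', n', by omega, fun i hi => (hagree i (by omega)).trans (if_pos hi), hx', hP', ?_⟩
    rw [ELp_snoc] at hgain
    omega

theorem exists_extension_ELp_pos [Finite S] (hσ : IsStrat1 G σ) {x : ℕ → S} {n : ℕ}
    (hxn : G.Unbounded ⊤ (x n)) (hx : ConsistentUpTo G σ x n) :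
    ∃ x' n', n < n' ∧ (∀ i ≤ n, x' i = x i) ∧ ConsistentUpTo G σ x' n' ∧
      G.Unbounded ⊤ (x' n') ∧ 0 < ELp G x' n' := by
  obtain ⟨x', n', hn, hagree, hx', hU, hgain⟩ :=
    (hxn.restrict (max (1 - ELp G x n) 1)).exists_extension hσ
      (fun _ _ hp hs ht => hs.of_p1 hp ht) x n rfl hxn hx
  have hn' : n ≠ n' := by
    rintro rfl
    rw [ELp_congr G hagree] at hgain
    omega
  exact ⟨x', n', by omega, hagree, hx', hU, by omega⟩

theorem exists_play_frequently_ELp_pos [Finite S] (hσ : IsStrat1 G σ)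
    (hs₀ : G.Unbounded ⊤ s₀) :
    ∃ π, IsPlay G s₀ π ∧ Consistent1 G σ π ∧ ∃ᶠ n in atTop, 0 < ELp G π n := by
  obtain ⟨π, hπ⟩ := exists_limit_of_forall_exists_extension
    (fun x n => x 0 = s₀ ∧ ConsistentUpTo G σ x n ∧ G.Unbounded ⊤ (x n) ∧ (0 < n → 0 < ELp G x n))
    (fun x n ⟨hx0, hx, hU, _⟩ => by
      obtain ⟨x', n', hn, hagree, hx', hU', hpos⟩ := exists_extension_ELp_pos hσ hU hx
      exact ⟨x', n', hn, hagree, (hagree 0 (Nat.zero_le _)).trans hx0, hx', hU', fun _ => hpos⟩)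
    (x₀ := fun _ => s₀) (n₀ := 0) ⟨rfl, fun _ h => absurd h (Nat.not_lt_zero _), hs₀, by omega⟩
  have hstep : ∀ i, ConsistentUpTo G σ π (i + 1) := fun i => by
    obtain ⟨x, n, hn, ⟨-, hx, -⟩, hagree⟩ := hπ (i + 1)
    exact hx.congr hn fun j hj => (hagree j (hj.trans hn)).symm
  refine ⟨π, ⟨?_, fun i => (hstep i i i.lt_succ_self).1⟩,
    fun i => (hstep i i i.lt_succ_self).2, ?_⟩
  · obtain ⟨x, n, -, ⟨hx0, -⟩, hagree⟩ := hπ 0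
    exact (hagree 0 (Nat.zero_le _)).trans hx0
  · refine frequently_atTop.mpr fun N => ?_
    obtain ⟨x, n, hn, ⟨-, -, -, hpos⟩, hagree⟩ := hπ (N + 1)
    exact ⟨n, by omega, (ELp_congr G hagree).trans_gt (hpos (by omega))⟩

variable (G) in
/-- Reweighting by `2 · den τ · w - num τ` moves the mean-payoff threshold `τ / 2` to `0`. -/
def recenter (τ : ℚ) : Game S :=
  { G with w := fun s t => 2 * τ.den * G.w s t - τ.num }

end Game

theorem ELp_recenter (G : Game S) (τ : ℚ) (π : ℕ → S) (n : ℕ) :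
    (ELp (G.recenter τ) π n : ℝ) = 2 * τ.den * (ELp G π n - τ / 2 * n) := by
  have hint : ELp (G.recenter τ) π n = 2 * τ.den * ELp G π n - τ.num * n := by
    simp only [ELp, Game.recenter, Finset.sum_sub_distrib, Finset.mul_sum, Finset.sum_const,
      Finset.card_range, nsmul_eq_mul, mul_comm]
  have hden : (τ.den : ℝ) ≠ 0 := by positivity
  rw [hint, Rat.cast_def]
  push_cast
  field_simp

theorem le_MPsupP_of_frequently (G : Game S) {π : ℕ → S} {a : ℝ}
    (h : ∃ᶠ n in atTop, a * n ≤ ELp G π n) : (a : EReal) ≤ MPsupP G π := by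
  refine le_limsup_of_frequently_le ((h.and_eventually (eventually_gt_atTop 0)).mono ?_)
  rintro n ⟨hle, hn⟩
  exact EReal.coe_le_coe_iff.mpr ((le_div_iff₀ (by exact_mod_cast hn)).mpr hle)

theorem half_le_MPsupP_of_frequently_recenter (G : Game S) (τ : ℚ) {π : ℕ → S}
    (h : ∃ᶠ n in atTop, 0 < ELp (G.recenter τ) π n) : ((τ / 2 : ℝ) : EReal) ≤ MPsupP G π :=
  le_MPsupP_of_frequently G <| h.mono fun n hn => by
    have hpos : (0 : ℝ) < ELp (G.recenter τ) π n := by exact_mod_cast hn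
    rw [ELp_recenter] at hpos
    nlinarith [(pos_of_mul_pos_right hpos (by positivity) : (0 : ℝ) < _)]

theorem ELp_le_of_recenter_le (G : Game S) (τ : ℚ) {π : ℕ → S} {n : ℕ} {C : ℝ}
    (h : (ELp (G.recenter τ) π n : ℝ) ≤ C) : (ELp G π n : ℝ) ≤ C / (2 * τ.den) + τ / 2 * n := by
  rw [ELp_recenter] at h
  have hden : (0 : ℝ) < 2 * τ.den := by positivity
  have := (le_div_iff₀ hden).mpr (by linarith : ((ELp G π n : ℝ) - τ / 2 * n) * (2 * τ.den) ≤ C)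
  linarith

theorem sum_range_natCast_add_one (n : ℕ) :
    ∑ i ∈ Finset.range n, ((i : ℝ) + 1) = n * (n + 1) / 2 := by
  induction n with
  | zero => simp
  | succ n ih =>
    rw [Finset.sum_range_succ, ih]
    push_cast
    ring

theorem AEinfP_eq_bot_and_AEsupP_eq_bot (G : Game S) {π : ℕ → S} {C a : ℝ} (ha : a < 0)
    (h : ∀ n, (ELp G π n : ℝ) ≤ C + a * n) : AEinfP G π = ⊥ ∧ AEsupP G π = ⊥ := by
  have hbound : ∀ n : ℕ, 0 < n →
      (∑ i ∈ Finset.range n, (ELp G π (i + 1) : ℝ)) / n ≤ a / 2 * n + (C + a / 2) := by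
    intro n hn
    rw [div_le_iff₀ (by exact_mod_cast hn)]
    calc ∑ i ∈ Finset.range n, (ELp G π (i + 1) : ℝ)
        ≤ ∑ i ∈ Finset.range n, (C + a * ((i : ℝ) + 1)) :=
          Finset.sum_le_sum fun i _ => by exact_mod_cast h (i + 1)
      _ = (a / 2 * n + (C + a / 2)) * n := by
          rw [Finset.sum_add_distrib, ← Finset.mul_sum, sum_range_natCast_add_one]
          simp only [Finset.sum_const, Finset.card_range, nsmul_eq_mul]
          ring
  have hlin : Tendsto (fun n : ℕ => a / 2 * n + (C + a / 2)) atTop atBot :=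
    tendsto_atBot_add_const_right _ _
      (tendsto_natCast_atTop_atTop.const_mul_atTop_of_neg (by linarith))
  have hlim : Tendsto (fun n : ℕ =>
      (((∑ i ∈ Finset.range n, (ELp G π (i + 1) : ℝ)) / n : ℝ) : EReal)) atTop (nhds ⊥) := by
    refine EReal.tendsto_nhds_bot_iff_real.mpr fun r => ?_
    filter_upwards [hlin.eventually_lt_atBot r, eventually_gt_atTop 0] with n hr hn
    exact EReal.coe_lt_coe_iff.mpr ((hbound n hn).trans_lt hr)
  exact ⟨hlim.liminf_eq, hlim.limsup_eq⟩

/-- If player 1 can win a mean-payoff objective with a strictly negative threshold, then he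
has a memoryless strategy forcing every consistent play to have average-energy `-∞` (for both
variants); in particular this memoryless strategy wins `AvgEnergyLevel t'` for every `t' : ℚ`. -/
theorem MP_neg_implies_AE_bot {S : Type} [Fintype S] (G : Game S) (s₀ : S)
    (h : ∃ t : ℚ, t < 0 ∧ ∃ σ : List S → S, Winning1 G s₀ σ (MeanPayOff G t)) :
    ∃ σ : List S → S, IsStrat1 G σ ∧ Memoryless σ ∧
      (∀ π, IsPlay G s₀ π → Consistent1 G σ π → AEinfP G π = ⊥ ∧ AEsupP G π = ⊥) ∧
      (∀ t' : ℚ, Winning1 G s₀ σ (AvgEnergyLevel G t')) := by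
  obtain ⟨τ, hτ, σ₀, hσ₀, hwin⟩ := h
  have hτ' : (τ : ℝ) < 0 := by exact_mod_cast hτ
  by_cases hU : (G.recenter τ).Unbounded ⊤ s₀
  · exfalso
    obtain ⟨π, hπ, hcons, hpos⟩ := Game.exists_play_frequently_ELp_pos (G := G.recenter τ) hσ₀ hU
    have := EReal.coe_le_coe_iff.mp
      ((half_le_MPsupP_of_frequently_recenter G τ hpos).trans (hwin π hπ hcons))
    linarith
  obtain ⟨σ, hσ, hmem, hbound⟩ := Game.exists_memoryless_ELp_le hU
  have hAE : ∀ π, IsPlay G s₀ π → Consistent1 G σ π → AEinfP G π = ⊥ ∧ AEsupP G π = ⊥ :=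
    fun π hπ hcons => AEinfP_eq_bot_and_AEsupP_eq_bot G (a := τ / 2) (by linarith) fun n =>
      ELp_le_of_recenter_le G τ (C := (G.recenter τ).potential ⊤ s₀)
        (by exact_mod_cast hbound π hπ hcons n)
  exact ⟨σ, hσ, hmem, hAE, fun _ => ⟨hσ, fun π hπ hcons => (hAE π hπ hcons).2.trans_le bot_le⟩⟩

end
end

section
/- Let a : ℕ → ℤ be a sequence with bounded absolute values (there is W ∈ ℕ with |a(k)| ≤ W for all k), and define the doubled interleaved sequence v : ℕ → ℤ by v(2k) = 2·a(k) and v(2k+1) = −2·a(k). Then the average-energy of v equals the mean-payoff of a: AEsup(v) = MPsup(a) and AEinf(v) = MPinf(a). -/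
open Filter

noncomputable section

/-- The doubled interleaved sequence: `v (2k) = 2 * a k` and `v (2k+1) = -(2 * a k)`. -/
def dblSeq (a : ℕ → ℤ) : ℕ → ℤ := fun n =>
  if n % 2 = 0 then 2 * a (n / 2) else -(2 * a (n / 2))

/-!
The energy levels of `dblSeq a` are `2 a k` at the odd position `2k + 1` and `0` at even
positions, so the running sum of the first `n` energy levels is `2 · EL a ⌈n/2⌉`. The
average-energy at `n` is therefore the mean-payoff of `a` at `⌈n/2⌉`, up to an error at most
`W / n`. Additive perturbations tending to `0` do not change limsups or liminfs in `EReal`, and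
`n ↦ ⌈n/2⌉` maps `atTop` onto `atTop`.
-/

open Topology Finset

lemma EL_succ (a : ℕ → ℤ) (n : ℕ) : EL a (n + 1) = EL a n + a n :=
  sum_range_succ a n

lemma abs_EL_le {a : ℕ → ℤ} {W : ℤ} (hW : ∀ k, |a k| ≤ W) (n : ℕ) : |EL a n| ≤ n * W :=
  calc |EL a n| ≤ ∑ i ∈ range n, |a i| := abs_sum_le_sum_abs _ _
    _ ≤ ∑ _i ∈ range n, W := sum_le_sum fun i _ => hW i
    _ = n * W := by simp

lemma EL_dblSeq (a : ℕ → ℤ) (n : ℕ) :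
    EL (dblSeq a) n = if n % 2 = 1 then 2 * a (n / 2) else 0 := by
  induction n with
  | zero => simp [EL]
  | succ n ih =>
    rw [EL_succ, ih]
    rcases Nat.mod_two_eq_zero_or_one n with h | h
    · simp [dblSeq, h, Nat.succ_mod_two_eq_one_iff.2 h, show (n + 1) / 2 = n / 2 by omega]
    · simp [dblSeq, h, Nat.succ_mod_two_eq_zero_iff.2 h]

lemma sum_EL_succ_dblSeq (a : ℕ → ℤ) (n : ℕ) :
    ∑ i ∈ range n, EL (dblSeq a) (i + 1) = 2 * EL a ((n + 1) / 2) := by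
  induction n with
  | zero => simp [EL]
  | succ n ih =>
    rw [sum_range_succ, ih, EL_dblSeq]
    rcases Nat.mod_two_eq_zero_or_one n with h | h
    · rw [if_pos (Nat.succ_mod_two_eq_one_iff.2 h), show (n + 1 + 1) / 2 = n / 2 + 1 by omega,
        show (n + 1) / 2 = n / 2 by omega, EL_succ]
      ring
    · rw [if_neg (by omega), show (n + 1 + 1) / 2 = (n + 1) / 2 by omega, add_zero]

lemma abs_two_mul_div_sub_div_le {x W : ℝ} {n k : ℕ} (hn : 0 < n) (hnk : n ≤ 2 * k)
    (hkn : 2 * k ≤ n + 1) (hx : |x| ≤ k * W) :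
    |2 * x / n - x / k| ≤ W / n := by
  have hn' : (0 : ℝ) < n := by exact_mod_cast hn
  have hk' : (0 : ℝ) < k := by exact_mod_cast (show 0 < k by omega)
  have hnk' : |(2 * k - n : ℝ)| ≤ 1 := by
    have h₁ : (n : ℝ) ≤ 2 * k := by exact_mod_cast hnk
    have h₂ : (2 * k : ℝ) ≤ n + 1 := by exact_mod_cast hkn
    exact abs_le.2 ⟨by linarith, by linarith⟩
  calc |2 * x / n - x / k| = |x| * |(2 * k - n : ℝ)| / (n * k) := by
        rw [← abs_mul, ← abs_of_pos (mul_pos hn' hk'), ← abs_div]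
        congr 1
        field_simp
    _ ≤ k * W / (n * k) := by
        gcongr ?_ / _
        exact (mul_le_of_le_one_right (abs_nonneg x) hnk').trans hx
    _ = W / n := by field_simp

lemma map_succ_div_two_atTop : map (fun n : ℕ => (n + 1) / 2) atTop = atTop := by
  calc map (fun n : ℕ => (n + 1) / 2) atTop = map (· / 2) (map (· + 1) atTop) := by
        rw [Filter.map_map]; rfl
    _ = atTop := by rw [map_add_atTop_eq_nat, map_div_atTop_eq_nat 2 two_pos]

namespace EReal

variable {α : Type*} {f : Filter α} [f.NeBot] {u w : α → ℝ}

lemma limsup_coe_le_of_tendsto_sub (h : Tendsto (fun x => u x - w x) f (𝓝 0)) :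
    limsup (fun x => (u x : EReal)) f ≤ limsup (fun x => (w x : EReal)) f := by
  have h0 : limsup (fun x => ((u x - w x : ℝ) : EReal)) f = 0 :=
    ((continuous_coe_real_ereal.tendsto 0).comp h).limsup_eq
  calc limsup (fun x => (u x : EReal)) f
        = limsup ((fun x => (w x : EReal)) + fun x => ((u x - w x : ℝ) : EReal)) f := by
          congr 1
          funext x
          rw [Pi.add_apply, ← coe_add, add_sub_cancel]
    _ ≤ limsup (fun x => (w x : EReal)) f + limsup (fun x => ((u x - w x : ℝ) : EReal)) f :=
        limsup_add_le (.inr (h0 ▸ zero_ne_top)) (.inr (h0 ▸ zero_ne_bot))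
    _ = limsup (fun x => (w x : EReal)) f := by rw [h0, add_zero]

lemma limsup_coe_eq_of_tendsto_sub (h : Tendsto (fun x => u x - w x) f (𝓝 0)) :
    limsup (fun x => (u x : EReal)) f = limsup (fun x => (w x : EReal)) f :=
  (limsup_coe_le_of_tendsto_sub h).antisymm
    (limsup_coe_le_of_tendsto_sub (by simpa [neg_add_eq_sub] using h.neg))

lemma liminf_coe_eq_of_tendsto_sub (h : Tendsto (fun x => u x - w x) f (𝓝 0)) :
    liminf (fun x => (u x : EReal)) f = liminf (fun x => (w x : EReal)) f := by
  have hneg : Tendsto (fun x => -u x - -w x) f (𝓝 0) := by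
    simpa [neg_add_eq_sub] using h.neg
  have key := limsup_coe_eq_of_tendsto_sub hneg
  simp only [coe_neg] at key
  rw [← neg_neg (fun x => (u x : EReal)), ← neg_neg (fun x => (w x : EReal)), liminf_neg,
    liminf_neg]
  exact congrArg Neg.neg key

end EReal

/-- For a bounded integer sequence `a`, the average-energy of the doubled interleaved
sequence equals the mean-payoff of `a` (for both the limsup and liminf variants). -/
theorem AE_dbl_eq_MP (a : ℕ → ℤ) (W : ℕ) (hW : ∀ k, |a k| ≤ (W : ℤ)) :
    AEsup (dblSeq a) = MPsup a ∧ AEinf (dblSeq a) = MPinf a := by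
  set k : ℕ → ℕ := fun n => (n + 1) / 2
  set mp : ℕ → ℝ := fun m => (EL a m : ℝ) / m
  have hAE (n : ℕ) :
      (∑ i ∈ range n, (EL (dblSeq a) (i + 1) : ℝ)) / n = 2 * (EL a (k n) : ℝ) / n := by
    exact_mod_cast congrArg (fun z : ℤ => (z : ℝ) / n) (sum_EL_succ_dblSeq a n)
  have hclose : Tendsto (fun n => 2 * (EL a (k n) : ℝ) / n - mp (k n)) atTop (𝓝 0) := by
    refine squeeze_zero_norm' ?_ (tendsto_const_div_atTop_nhds_zero_nat (W : ℝ))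
    filter_upwards [eventually_gt_atTop 0] with n hn
    refine abs_two_mul_div_sub_div_le hn (by simp only [k]; omega) (by simp only [k]; omega) ?_
    exact_mod_cast abs_EL_le hW (k n)
  have hmap : map k atTop = atTop := map_succ_div_two_atTop
  refine ⟨?_, ?_⟩
  · rw [AEsup, MPsup]
    simp only [hAE]
    rw [EReal.limsup_coe_eq_of_tendsto_sub hclose]
    exact (limsup_comp (fun m => (mp m : EReal)) k atTop).trans (by rw [hmap])
  · rw [AEinf, MPinf]
    simp only [hAE]
    rw [EReal.liminf_coe_eq_of_tendsto_sub hclose]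
    exact (liminf_comp (fun m => (mp m : EReal)) k atTop).trans (by rw [hmap])

end
end
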